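/- For every n ∈ ℤ with n ≠ 0 and every smooth rapidly decaying (Schwartz) function w : ℝ → ℂ, one has ‖w'‖_{L²(ℝ)} ≤ (2|n|)^{-1/2}·‖w'' + i·n·w‖_{L²(ℝ)} and ‖w‖_{L²(ℝ)} ≤ |n|^{-1}·‖w'' + i·n·w‖_{L²(ℝ)}. -/

import Mathlib

open MeasureTheory Real Filter Complex SchwartzMap Topology


noncomputable section

lemma schwartz_bdd (g : SchwartzMap ℝ ℂ) : ∃ C, ∀ x, ‖g x‖ ≤ C := by
  refine ⟨SchwartzMap.seminorm ℝ 0 0 g, fun x => ?_⟩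
  simpa using g.le_seminorm ℝ 0 0 x

lemma schwartz_int_mul_conj (g h : SchwartzMap ℝ ℂ) :
    Integrable (fun x => g x * (starRingEnd ℂ) (h x)) volume := by
  refine Integrable.bdd_mul ?_ g.continuous.aestronglyMeasurable (ae_of_all _ (schwartz_bdd g).choose_spec)
  exact h.integrable.norm.mono' (continuous_star.comp h.continuous).aestronglyMeasurable
    (Eventually.of_forall fun x => by simp)

lemma schwartz_int_normSq (g : SchwartzMap ℝ ℂ) :
    Integrable (fun x => ‖g x‖ ^ 2) volume := by
  have := Integrable.bdd_mul (𝕜 := ℝ) (c := (schwartz_bdd g).choose) ((g.integrable (μ := volume)).norm)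
    g.continuous.norm.aestronglyMeasurable
    (ae_of_all _ fun x => by simpa using (schwartz_bdd g).choose_spec x)
  simpa [sq] using this

lemma schwartz_tendsto_zero (g : SchwartzMap ℝ ℂ) :
    Tendsto (fun x : ℝ => g x) atTop (𝓝 0) ∧ Tendsto (fun x : ℝ => g x) atBot (𝓝 0) := by
  have h : Tendsto (fun x : ℝ => g x) (Filter.cocompact ℝ) (𝓝 0) := zero_at_infty g
  rw [cocompact_eq_atBot_atTop] at h
  exact ⟨h.mono_left le_sup_right, h.mono_left le_sup_left⟩

lemma integral_deriv_eq_zero' (F F' : ℝ → ℂ) (hF : ∀ x, HasDerivAt F (F' x) x)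
    (hF' : Integrable F') (h0 : Tendsto F atTop (𝓝 0)) (h0' : Tendsto F atBot (𝓝 0)) :
    ∫ x : ℝ, F' x = 0 := by
  have key : Tendsto (fun R : ℝ => ∫ x in (-R)..R, F' x) atTop (𝓝 (∫ x : ℝ, F' x)) :=
    intervalIntegral_tendsto_integral hF' tendsto_neg_atTop_atBot tendsto_id
  have eq : ∀ R : ℝ, ∫ x in (-R)..R, F' x = F R - F (-R) := fun R =>
    intervalIntegral.integral_eq_sub_of_hasDerivAt (fun x _ => hF x) hF'.intervalIntegrable
  have key2 : Tendsto (fun R : ℝ => F R - F (-R)) atTop (𝓝 (0 - 0)) :=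
    h0.sub (h0'.comp tendsto_neg_atTop_atBot)
  simp only [sub_zero] at key2
  exact tendsto_nhds_unique (key.congr (fun R => eq R)) key2

end

noncomputable section

lemma schwartz_ibp (u u1 u2 : SchwartzMap ℝ ℂ) (h1 : ∀ x, HasDerivAt u (u1 x) x)
    (h2 : ∀ x, HasDerivAt u1 (u2 x) x) :
    ∫ x : ℝ, u2 x * (starRingEnd ℂ) (u x)
      = -((∫ x : ℝ, ‖u1 x‖ ^ 2 : ℝ) : ℂ) := by
  have hderiv : ∀ x : ℝ, HasDerivAt (fun y => u1 y * (starRingEnd ℂ) (u y))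
      (u2 x * (starRingEnd ℂ) (u x) + u1 x * (starRingEnd ℂ) (u1 x)) x := by
    intro x
    exact (h2 x).mul (h1 x).star
  have hint : Integrable (fun x : ℝ => u2 x * (starRingEnd ℂ) (u x)
      + u1 x * (starRingEnd ℂ) (u1 x)) volume :=
    (schwartz_int_mul_conj u2 u).add (schwartz_int_mul_conj u1 u1)
  have htop : Tendsto (fun x : ℝ => u1 x * (starRingEnd ℂ) (u x)) atTop (𝓝 0) := by
    have := (schwartz_tendsto_zero u1).1.mul
      (((continuous_star.tendsto (0 : ℂ)).comp (schwartz_tendsto_zero u).1))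
    simpa using this
  have hbot : Tendsto (fun x : ℝ => u1 x * (starRingEnd ℂ) (u x)) atBot (𝓝 0) := by
    have := (schwartz_tendsto_zero u1).2.mul
      (((continuous_star.tendsto (0 : ℂ)).comp (schwartz_tendsto_zero u).2))
    simpa using this
  have hzero := integral_deriv_eq_zero' _ _ hderiv hint htop hbot
  rw [integral_add (schwartz_int_mul_conj u2 u) (schwartz_int_mul_conj u1 u1)] at hzero
  have hsq : ∫ x : ℝ, u1 x * (starRingEnd ℂ) (u1 x) = ((∫ x : ℝ, ‖u1 x‖ ^ 2 : ℝ) : ℂ) := by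
    have heq : (fun x : ℝ => u1 x * (starRingEnd ℂ) (u1 x))
        = fun x : ℝ => ((‖u1 x‖ ^ 2 : ℝ) : ℂ) := by
      ext x
      rw [Complex.mul_conj, Complex.normSq_eq_norm_sq]
    rw [heq]
    exact integral_ofReal
  rw [hsq] at hzero
  linear_combination hzero

end

/-- The `L²(ℝ)` norm of a complex-valued function. -/
noncomputable def L2normC (g : ℝ → ℂ) : ℝ := Real.sqrt (∫ x : ℝ, ‖g x‖ ^ 2)

set_option maxHeartbeats 1000000 in
/-- Resolvent bounds for `(i n + ∂_x²)` on Schwartz functions: for `n ≠ 0`,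
`‖w'‖_{L²} ≤ (2|n|)^{-1/2} ‖w'' + i n w‖_{L²}` and `‖w‖_{L²} ≤ |n|⁻¹ ‖w'' + i n w‖_{L²}`. -/
theorem resolvent_bounds (n : ℤ) (hn : n ≠ 0) (w : SchwartzMap ℝ ℂ) :
    L2normC (deriv (w : ℝ → ℂ))
        ≤ (2 * |(n : ℝ)|) ^ (-(1 / 2 : ℝ))
          * L2normC (fun x => deriv (deriv (w : ℝ → ℂ)) x + (n : ℂ) * Complex.I * w x) ∧
      L2normC (w : ℝ → ℂ)
        ≤ |(n : ℝ)|⁻¹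
          * L2normC (fun x => deriv (deriv (w : ℝ → ℂ)) x + (n : ℂ) * Complex.I * w x) := by
  have hnR : (n : ℝ) ≠ 0 := Int.cast_ne_zero.mpr hn
  have habs : 0 < |(n : ℝ)| := abs_pos.mpr hnR
  set c : ℂ := (n : ℂ) * Complex.I with hc
  set w1 : SchwartzMap ℝ ℂ := derivCLM ℝ ℂ w with hw1def
  set w2 : SchwartzMap ℝ ℂ := derivCLM ℝ ℂ w1 with hw2def
  have hw1 : ⇑w1 = deriv (⇑w) := funext fun x => derivCLM_apply ℝ w x
  have hw2 : ⇑w2 = deriv (deriv (⇑w)) := by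
    rw [← hw1]; exact funext fun x => derivCLM_apply ℝ w1 x
  have h1 : ∀ x, HasDerivAt (⇑w) (w1 x) x := fun x => by
    rw [show w1 x = deriv (⇑w) x from congrFun hw1 x]
    exact w.differentiableAt.hasDerivAt
  have h2 : ∀ x, HasDerivAt (⇑w1) (w2 x) x := fun x => by
    rw [show w2 x = deriv (⇑w1) x from derivCLM_apply ℝ w1 x]
    exact w1.differentiableAt.hasDerivAt
  set g : SchwartzMap ℝ ℂ := w2 + c • w with hgdef
  have hg : ⇑g = fun x => deriv (deriv (⇑w)) x + c * w x := by
    funext x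
    simp [hgdef, ← hw2, smul_eq_mul]
  -- the three squared L² norms
  set A : ℝ := ∫ x : ℝ, ‖w x‖ ^ 2 with hAdef
  set B : ℝ := ∫ x : ℝ, ‖w1 x‖ ^ 2 with hBdef
  set C : ℝ := ∫ x : ℝ, ‖w2 x‖ ^ 2 with hCdef
  set S : ℝ := ∫ x : ℝ, ‖g x‖ ^ 2 with hSdef
  have hA0 : 0 ≤ A := integral_nonneg fun x => by positivity
  have hB0 : 0 ≤ B := integral_nonneg fun x => by positivity
  have hC0 : 0 ≤ C := integral_nonneg fun x => by positivity
  have hI : ∫ x : ℝ, w2 x * (starRingEnd ℂ) (w x) = -((B : ℝ) : ℂ) :=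
    schwartz_ibp w w1 w2 h1 h2
  -- the cross term
  have hJint : Integrable (fun x : ℝ => w2 x * (starRingEnd ℂ) (c * w x)) volume := by
    have := schwartz_int_mul_conj w2 (c • w)
    simpa [smul_eq_mul] using this
  have hJ : ∫ x : ℝ, w2 x * (starRingEnd ℂ) (c * w x) = c * (B : ℂ) := by
    have heq : (fun x : ℝ => w2 x * (starRingEnd ℂ) (c * w x))
        = fun x : ℝ => (starRingEnd ℂ) c * (w2 x * (starRingEnd ℂ) (w x)) := by
      funext x; rw [map_mul]; ring
    rw [heq, integral_const_mul, hI, hc]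
    simp
  have hJre : (∫ x : ℝ, w2 x * (starRingEnd ℂ) (c * w x)).re = 0 := by
    rw [hJ, hc]
    simp [Complex.mul_re]
  -- pointwise expansion of ‖g‖²
  have hnormc : ‖c‖ = |(n : ℝ)| := by
    rw [hc, norm_mul, Complex.norm_I, mul_one]
    simp
  have hpt : ∀ x : ℝ, ‖g x‖ ^ 2 = (‖w2 x‖ ^ 2 + (n : ℝ) ^ 2 * ‖w x‖ ^ 2)
      + 2 * (w2 x * (starRingEnd ℂ) (c * w x)).re := by
    intro x
    have hgx : g x = w2 x + c * w x := by simp [hgdef, smul_eq_mul]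
    have e := Complex.normSq_add (w2 x) (c * w x)
    simp only [Complex.normSq_eq_norm_sq] at e
    rw [hgx, e, norm_mul, hnormc]
    ring_nf
    rw [_root_.sq_abs]
    ring
  have hint1 : Integrable (fun x : ℝ => ‖w2 x‖ ^ 2 + (n : ℝ) ^ 2 * ‖w x‖ ^ 2) volume :=
    (schwartz_int_normSq w2).add ((schwartz_int_normSq w).const_mul _)
  have hS : S = C + (n : ℝ) ^ 2 * A := by
    rw [hSdef]
    calc (∫ x : ℝ, ‖g x‖ ^ 2)
        = ∫ x : ℝ, ((‖w2 x‖ ^ 2 + (n : ℝ) ^ 2 * ‖w x‖ ^ 2)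
            + 2 * (w2 x * (starRingEnd ℂ) (c * w x)).re) := by
          exact integral_congr_ae (Eventually.of_forall fun x => hpt x)
      _ = (∫ x : ℝ, (‖w2 x‖ ^ 2 + (n : ℝ) ^ 2 * ‖w x‖ ^ 2))
            + ∫ x : ℝ, 2 * (w2 x * (starRingEnd ℂ) (c * w x)).re := by
          exact integral_add hint1 ((hJint.re).const_mul 2)
      _ = (C + (n : ℝ) ^ 2 * A) + 2 * (∫ x : ℝ, w2 x * (starRingEnd ℂ) (c * w x)).re := by
          have hre : ∫ x : ℝ, (w2 x * (starRingEnd ℂ) (c * w x)).re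
              = (∫ x : ℝ, w2 x * (starRingEnd ℂ) (c * w x)).re := by
            simpa using integral_re hJint
          rw [integral_add (schwartz_int_normSq w2) ((schwartz_int_normSq w).const_mul _),
            integral_const_mul, integral_const_mul, hre]
      _ = C + (n : ℝ) ^ 2 * A := by rw [hJre]; ring
  have hS0 : 0 ≤ S := by
    rw [hS]; linarith [hC0, mul_nonneg (sq_nonneg ((n : ℝ))) hA0]
  -- bound for B
  have hBre : ∫ x : ℝ, (w2 x * (starRingEnd ℂ) (w x)).re = -B := by
    have := integral_re (schwartz_int_mul_conj w2 w)
    rw [hI] at this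
    simpa using this
  have hBbound : 2 * |(n : ℝ)| * B ≤ S := by
    have hmono : ∫ x : ℝ, (-(2 * |(n : ℝ)|)) * (w2 x * (starRingEnd ℂ) (w x)).re
        ≤ ∫ x : ℝ, (‖w2 x‖ ^ 2 + (n : ℝ) ^ 2 * ‖w x‖ ^ 2) := by
      refine integral_mono (((schwartz_int_mul_conj w2 w).re).const_mul _) hint1 fun x => ?_
      have h1 : |(w2 x * (starRingEnd ℂ) (w x)).re| ≤ ‖w2 x‖ * ‖w x‖ := by
        calc |(w2 x * (starRingEnd ℂ) (w x)).re| ≤ ‖w2 x * (starRingEnd ℂ) (w x)‖ :=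
              Complex.abs_re_le_norm _
          _ = ‖w2 x‖ * ‖w x‖ := by rw [norm_mul]; simp
      have h2 : 2 * |(n : ℝ)| * (‖w2 x‖ * ‖w x‖) ≤ ‖w2 x‖ ^ 2 + (n : ℝ) ^ 2 * ‖w x‖ ^ 2 := by
        nlinarith [sq_nonneg (‖w2 x‖ - |(n : ℝ)| * ‖w x‖), _root_.sq_abs ((n : ℝ))]
      nlinarith [abs_nonneg ((w2 x * (starRingEnd ℂ) (w x)).re), neg_abs_le ((w2 x * (starRingEnd ℂ) (w x)).re), habs]
    rw [integral_const_mul, hBre] at hmono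
    have hrhs : ∫ x : ℝ, (‖w2 x‖ ^ 2 + (n : ℝ) ^ 2 * ‖w x‖ ^ 2) = C + (n : ℝ) ^ 2 * A := by
      rw [integral_add (schwartz_int_normSq w2) ((schwartz_int_normSq w).const_mul _),
        integral_const_mul]
    rw [hrhs] at hmono
    rw [hS]
    linarith
  have hAbound : (n : ℝ) ^ 2 * A ≤ S := by rw [hS]; linarith
  -- rewrite the L² norms
  have hL1 : L2normC (deriv (⇑w)) = Real.sqrt B := by rw [L2normC, ← hw1, hBdef]
  have hL2 : L2normC (fun x => deriv (deriv (⇑w)) x + (n : ℂ) * Complex.I * w x)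
      = Real.sqrt S := by
    have hfun : (fun x : ℝ => deriv (deriv (⇑w)) x + (n : ℂ) * Complex.I * w x) = ⇑g := by
      funext x
      rw [hg, hc]
    rw [L2normC]
    have hintg : (∫ x : ℝ, ‖deriv (deriv (⇑w)) x + (n : ℂ) * Complex.I * w x‖ ^ 2) = S := by
      rw [hSdef]
      exact integral_congr_ae (Eventually.of_forall fun x => congrArg (fun z : ℂ => ‖z‖ ^ 2) (congrFun hfun x))
    rw [hintg]
  have hL0 : L2normC (⇑w) = Real.sqrt A := by rw [L2normC, hAdef]
  constructor
  · rw [hL1, hL2]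
    have h2n : (0 : ℝ) < 2 * |(n : ℝ)| := by positivity
    have hrpow : (2 * |(n : ℝ)|) ^ (-(1 / 2 : ℝ)) = (Real.sqrt (2 * |(n : ℝ)|))⁻¹ := by
      rw [Real.rpow_neg h2n.le, Real.sqrt_eq_rpow]
    rw [hrpow]
    have hBle : B ≤ (2 * |(n : ℝ)|)⁻¹ * S := by
      rw [inv_mul_eq_div, le_div_iff₀ h2n]
      linarith
    calc Real.sqrt B ≤ Real.sqrt ((2 * |(n : ℝ)|)⁻¹ * S) := Real.sqrt_le_sqrt hBle
      _ = (Real.sqrt (2 * |(n : ℝ)|))⁻¹ * Real.sqrt S := by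
          rw [Real.sqrt_mul (by positivity), Real.sqrt_inv]
  · rw [hL0, hL2]
    have hn2 : (0 : ℝ) < (n : ℝ) ^ 2 := by positivity
    have hAle : A ≤ ((n : ℝ) ^ 2)⁻¹ * S := by
      rw [inv_mul_eq_div, le_div_iff₀ hn2]
      linarith
    calc Real.sqrt A ≤ Real.sqrt (((n : ℝ) ^ 2)⁻¹ * S) := Real.sqrt_le_sqrt hAle
      _ = |(n : ℝ)|⁻¹ * Real.sqrt S := by
          rw [Real.sqrt_mul (by positivity), Real.sqrt_inv, Real.sqrt_sq_eq_abs]
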